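/- Let A be an n×n Hermitian complex matrix, c > 0 a real number, and N ≥ 0 a real number, such that Tr(A^{2m}) = N·c^{2m} for every natural number m ≥ 1. Then the trace norm of A equals N·c: ‖A‖₁ = N·c. (This justifies the replica-limit evaluation of negativities from flat spectra: the even-power traces determine that all nonzero eigenvalues of A have absolute value c, with N of them in total.) -/

import Mathlib

open scoped ComplexOrder Matrix

noncomputable section

/-- The trace norm `‖M‖₁ = Tr√(MᴴM)` of a complex matrix. -/
def traceNorm {m n : Type*} [Fintype m] [Fintype n] [DecidableEq n]
    (M : Matrix m n ℂ) : ℝ :=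
  ((Matrix.posSemidef_conjTranspose_mul_self M).1.eigenvectorUnitary.1 *
    Matrix.diagonal (((↑) : ℝ → ℂ) ∘ (√·) ∘ (Matrix.posSemidef_conjTranspose_mul_self M).1.eigenvalues) *
    (star (Matrix.posSemidef_conjTranspose_mul_self M).1.eigenvectorUnitary :
      Matrix n n ℂ)).trace.re

end

/-! With `μ` the eigenvalues of `A`, `Tr A^k = ∑ μᵢ^k` and `‖A‖₁ = Tr |A| = ∑ |μᵢ|`. The moments
`m = 1, 2, 3` give `∑ μᵢ² (μᵢ² - c²)² = N c⁶ (1 - 2 + 1) = 0`, so every `μᵢ` is `0` or `±c`.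
Hence `|μᵢ| c = μᵢ²`, and `∑ |μᵢ| = Tr A² / c = N c`. -/

open scoped MatrixOrder

namespace Matrix.IsHermitian

variable {n 𝕜 : Type*} [RCLike 𝕜] [Fintype n] [DecidableEq n] {A : Matrix n n 𝕜}

lemma trace_cfc (hA : A.IsHermitian) (f : ℝ → ℝ) :
    (cfc f A).trace = ∑ i, (f (hA.eigenvalues i) : 𝕜) := by
  rw [hA.cfc_eq, IsHermitian.cfc, Unitary.conjStarAlgAut_apply, trace_mul_cycle,
    Unitary.coe_star_mul_self, one_mul, trace_diagonal]
  rfl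

lemma trace_pow (hA : A.IsHermitian) (k : ℕ) :
    (A ^ k).trace = ∑ i, (hA.eigenvalues i : 𝕜) ^ k := by
  rw [← cfc_pow_id (R := ℝ) A k hA.isSelfAdjoint, hA.trace_cfc]
  push_cast
  rfl

lemma trace_abs (hA : A.IsHermitian) :
    (CFC.abs A).trace = ∑ i, ((|hA.eigenvalues i| : ℝ) : 𝕜) := by
  rw [CFC.abs_eq_cfc_norm A hA.isSelfAdjoint, hA.trace_cfc]
  rfl

end Matrix.IsHermitian

lemma traceNorm_eq_re_trace_sqrt {m n : Type*} [Fintype m] [Fintype n] [DecidableEq n]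
    (M : Matrix m n ℂ) : traceNorm M = (CFC.sqrt (Mᴴ * M)).trace.re := by
  have hM := Matrix.posSemidef_conjTranspose_mul_self M
  rw [CFC.sqrt_eq_real_sqrt _ hM.nonneg, cfcₙ_eq_cfc (hf0 := Real.sqrt_zero), hM.1.cfc_eq]
  rfl

lemma Matrix.IsHermitian.traceNorm_eq_sum_abs_eigenvalues {n : Type*} [Fintype n] [DecidableEq n]
    {A : Matrix n n ℂ} (hA : A.IsHermitian) : traceNorm A = ∑ i, |hA.eigenvalues i| := by
  rw [traceNorm_eq_re_trace_sqrt, ← Matrix.star_eq_conjTranspose, ← CFC.abs, hA.trace_abs,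
    ← RCLike.ofReal_sum]
  exact Complex.ofReal_re _

section FlatMoments

variable {ι : Type*} [Fintype ι] {μ : ι → ℝ} {c N : ℝ}

lemma abs_mul_eq_sq_of_flat_moments (hc : 0 ≤ c) (h2 : ∑ i, μ i ^ 2 = N * c ^ 2)
    (h4 : ∑ i, μ i ^ 4 = N * c ^ 4) (h6 : ∑ i, μ i ^ 6 = N * c ^ 6) (i : ι) :
    |μ i| * c = μ i ^ 2 := by
  have hsum : ∑ i, μ i ^ 2 * (μ i ^ 2 - c ^ 2) ^ 2 = 0 := by
    calc ∑ i, μ i ^ 2 * (μ i ^ 2 - c ^ 2) ^ 2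
        = ∑ i, μ i ^ 6 - 2 * c ^ 2 * ∑ i, μ i ^ 4 + c ^ 4 * ∑ i, μ i ^ 2 := by
          simp only [Finset.mul_sum, ← Finset.sum_sub_distrib, ← Finset.sum_add_distrib]
          exact Finset.sum_congr rfl fun i _ => by ring
      _ = 0 := by rw [h2, h4, h6]; ring
  have hi := (Finset.sum_eq_zero_iff_of_nonneg (fun i _ => by positivity)).mp hsum i
    (Finset.mem_univ i)
  rcases mul_eq_zero.mp hi with hμ | hμ
  · simp [pow_eq_zero_iff two_ne_zero |>.mp hμ]
  · have hsq : μ i ^ 2 = c ^ 2 := sub_eq_zero.mp (pow_eq_zero_iff two_ne_zero |>.mp hμ)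
    rw [hsq, (sq_eq_sq_iff_abs_eq_abs _ _).mp hsq, abs_of_nonneg hc, sq]

lemma sum_abs_eq_of_flat_moments (hc : 0 < c) (h2 : ∑ i, μ i ^ 2 = N * c ^ 2)
    (h4 : ∑ i, μ i ^ 4 = N * c ^ 4) (h6 : ∑ i, μ i ^ 6 = N * c ^ 6) :
    ∑ i, |μ i| = N * c := by
  refine mul_right_cancel₀ hc.ne' ?_
  rw [Finset.sum_mul,
    Finset.sum_congr rfl fun i _ => abs_mul_eq_sq_of_flat_moments hc.le h2 h4 h6 i, h2]
  ring

end FlatMoments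

theorem traceNorm_of_flat_spectrum_general {n : ℕ} (A : Matrix (Fin n) (Fin n) ℂ)
    (hA : A.IsHermitian) (c : ℝ) (hc : 0 < c) (N : ℝ)
    (h : ∀ m : ℕ, 1 ≤ m → (A ^ (2 * m)).trace = ((N * c ^ (2 * m) : ℝ) : ℂ)) :
    traceNorm A = N * c := by
  have moment (m : ℕ) (hm : 1 ≤ m) : ∑ i, hA.eigenvalues i ^ (2 * m) = N * c ^ (2 * m) := by
    apply Complex.ofReal_injective
    rw [← h m hm, hA.trace_pow]
    push_cast
    rfl
  rw [hA.traceNorm_eq_sum_abs_eigenvalues]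
  exact sum_abs_eq_of_flat_moments hc (moment 1 le_rfl) (moment 2 one_le_two)
    (moment 3 (by norm_num))

/-- If a Hermitian matrix `A` satisfies `Tr(A^{2m}) = N·c^{2m}` for all `m ≥ 1`
(with `c > 0`, `N ≥ 0`), then `‖A‖₁ = N·c`. -/
theorem traceNorm_of_flat_spectrum {n : ℕ} (A : Matrix (Fin n) (Fin n) ℂ)
    (hA : A.IsHermitian) (c : ℝ) (hc : 0 < c) (N : ℝ) (hN : 0 ≤ N)
    (h : ∀ m : ℕ, 1 ≤ m → (A ^ (2 * m)).trace = ((N * c ^ (2 * m) : ℝ) : ℂ)) :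
    traceNorm A = N * c :=
  traceNorm_of_flat_spectrum_general A hA c hc N h
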